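/- The Morse complex of the centipede graph 𝒞_v (a path on v vertices with one leaf attached to each vertex) is homotopy equivalent to S^{v-1}. -/

import Mathlib

open Finset

/-- An abstract simplicial complex on vertex type `V`. -/
structure SComplex (V : Type*) where
  faces : Finset V → Prop
  not_empty : ¬ faces ∅
  down_closed : ∀ {σ τ : Finset V}, faces τ → σ ⊆ τ → σ.Nonempty → faces σ

/-- The complex generated by a set of simplices (downward closure). -/
def ofGens {V : Type*} (gens : Set (Finset V)) : SComplex V where
  faces σ := σ.Nonempty ∧ ∃ τ ∈ gens, σ ⊆ τ
  not_empty h := by simpa using h.1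
  down_closed := by
    rintro σ τ ⟨-, τ', hτ', hsub'⟩ hsub hne
    exact ⟨hne, τ', hτ', hsub.trans hsub'⟩

/-- A primitive (gradient) vector field on `K`: a single regular pair `(σ, τ)`
with `σ` a codimension-one face of `τ`. -/
structure VPair {V : Type*} (K : SComplex V) where
  lo : Finset V
  hi : Finset V
  lo_face : K.faces lo
  hi_face : K.faces hi
  lo_sub : lo ⊆ hi
  card_eq : hi.card = lo.card + 1

noncomputable instance {V : Type*} (K : SComplex V) : DecidableEq (VPair K) :=
  Classical.decEq _

/-- Two primitive pairs share no simplex. -/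
def VPair.Compatible {V : Type*} {K : SComplex V} (p q : VPair K) : Prop :=
  p.lo ≠ q.lo ∧ p.lo ≠ q.hi ∧ p.hi ≠ q.lo ∧ p.hi ≠ q.hi

/-- A discrete vector field: each simplex occurs in at most one pair. -/
def IsDVF {V : Type*} {K : SComplex V} (W : Set (VPair K)) : Prop :=
  ∀ p ∈ W, ∀ q ∈ W, p ≠ q → VPair.Compatible p q

/-- Existence of a nontrivial closed `V`-path. -/
def HasClosedPath {V : Type*} {K : SComplex V} (W : Set (VPair K)) : Prop :=
  ∃ k : ℕ, 0 < k ∧ ∃ c : ZMod k → VPair K, (∀ i, c i ∈ W) ∧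
    ∀ i, (c (i + 1)).lo ⊆ (c i).hi ∧ (c (i + 1)).lo ≠ (c i).lo ∧
      (c (i + 1)).lo.card + 1 = (c i).hi.card

/-- A gradient vector field: a discrete vector field with no nontrivial closed path. -/
def IsGVF {V : Type*} {K : SComplex V} (W : Set (VPair K)) : Prop :=
  IsDVF W ∧ ¬ HasClosedPath W

/-- The Morse complex of `K`: vertices are primitive gradient vector fields,
simplices are gradient vector fields. -/
def MorseComplex {V : Type*} (K : SComplex V) : SComplex (VPair K) where
  faces S := S.Nonempty ∧ IsGVF {p | p ∈ S}
  not_empty h := by simpa using h.1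
  down_closed := by
    rintro σ τ ⟨hne', hdvf, hnc⟩ hsub hne
    refine ⟨hne, fun p hp q hq hpq => hdvf p (hsub hp) q (hsub hq) hpq, fun h => hnc ?_⟩
    obtain ⟨k, hk, c, hc, hpath⟩ := h
    exact ⟨k, hk, c, fun i => hsub (hc i), hpath⟩

/-- The pure Morse complex: the subcomplex of `MorseComplex K` generated by the
facets of maximum dimension (maximum gradient vector fields). -/
def pureMorse {V : Type*} (K : SComplex V) : SComplex (VPair K) where
  faces S := (MorseComplex K).faces S ∧ ∃ T : Finset (VPair K), S ⊆ T ∧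
      (MorseComplex K).faces T ∧
      ∀ T' : Finset (VPair K), (MorseComplex K).faces T' → T'.card ≤ T.card
  not_empty h := (MorseComplex K).not_empty h.1
  down_closed := by
    rintro σ τ ⟨hτ, T, hsub', hT, hmax⟩ hsub hne
    exact ⟨(MorseComplex K).down_closed hτ hsub hne, T, hsub.trans hsub', hT, hmax⟩

/-- `σ` is a facet (maximal simplex) of `K`. -/
def IsFacet {V : Type*} (K : SComplex V) (σ : Finset V) : Prop :=
  K.faces σ ∧ ∀ τ, K.faces τ → σ ⊆ τ → σ = τ

/-- `w` dominates `w'`: every facet containing `w'` contains `w`. -/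
def Dominates {V : Type*} (K : SComplex V) (w w' : V) : Prop :=
  ∀ σ, IsFacet K σ → w' ∈ σ → w ∈ σ

/-- `K` is minimal: no vertex dominates another vertex. -/
def MinimalComplex {V : Type*} (K : SComplex V) : Prop :=
  ∀ w w' : V, K.faces {w} → K.faces {w'} → w ≠ w' → ¬ Dominates K w w'

/-- Strong collapsibility of a face predicate: a sequence of removals of
dominated vertices reaching a single point. -/
inductive SCAux {V : Type*} : (Finset V → Prop) → Prop
  | point (F : Finset V → Prop) (v : V) (h : ∀ σ, F σ ↔ σ = {v}) : SCAux F
  | step (F : Finset V → Prop) (w w' : V) (hne : w ≠ w') (hw : F {w}) (hw' : F {w'})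
      (hdom : ∀ σ, (F σ ∧ ∀ τ, F τ → σ ⊆ τ → σ = τ) → w' ∈ σ → w ∈ σ)
      (h : SCAux (fun σ => F σ ∧ w' ∉ σ)) : SCAux F

def StronglyCollapsible {V : Type*} (K : SComplex V) : Prop := SCAux K.faces

/-- `F` strongly collapses to `G` by a sequence of removals of dominated vertices. -/
inductive SCTo {V : Type*} : (Finset V → Prop) → (Finset V → Prop) → Prop
  | refl (F : Finset V → Prop) : SCTo F F
  | step (F G : Finset V → Prop) (w w' : V) (hne : w ≠ w') (hw : F {w}) (hw' : F {w'})
      (hdom : ∀ σ, (F σ ∧ ∀ τ, F τ → σ ⊆ τ → σ = τ) → w' ∈ σ → w ∈ σ)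
      (h : SCTo (fun σ => F σ ∧ w' ∉ σ) G) : SCTo F G

/-- Collapsibility (Forman): removal of free pairs down to a point. -/
inductive CollAux {V : Type*} : (Finset V → Prop) → Prop
  | point (F : Finset V → Prop) (v : V) (h : ∀ σ, F σ ↔ σ = {v}) : CollAux F
  | step (F : Finset V → Prop) (σ τ : Finset V) (hστ : σ ⊂ τ) (hσ : F σ) (hτ : F τ)
      (hfree : ∀ ρ, F ρ → σ ⊂ ρ → ρ = τ)
      (h : CollAux (fun ρ => F ρ ∧ ρ ≠ σ ∧ ρ ≠ τ)) : CollAux F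

def Collapsible {V : Type*} (K : SComplex V) : Prop := CollAux K.faces

/-- The degree of a vertex: the number of edges of `K` containing it. -/
noncomputable def sdeg {V : Type*} (K : SComplex V) (x : V) : ℕ :=
  Set.ncard {σ : Finset V | K.faces σ ∧ σ.card = 2 ∧ x ∈ σ}

/-- Image of a finset, with a classical decidability instance. -/
noncomputable def fimage {V W : Type*} (f : V → W) (σ : Finset V) : Finset W :=
  haveI := Classical.decEq W
  σ.image f

/-- An isomorphism between two simplicial complexes given by face predicates. -/
structure ComplexIso {V W : Type*} (F : Finset V → Prop) (G : Finset W → Prop) where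
  toFun : V → W
  invFun : W → V
  left_inv : ∀ x, F {x} → invFun (toFun x) = x
  right_inv : ∀ y, G {y} → toFun (invFun y) = y
  map_face : ∀ σ, F σ → G (fimage toFun σ)
  inv_face : ∀ τ, G τ → F (fimage invFun τ)

/-- The join of two simplicial complexes. -/
def sJoin {V W : Type*} [DecidableEq V] [DecidableEq W] (K : SComplex V) (L : SComplex W) :
    SComplex (V ⊕ W) :=
  ofGens {σ | ∃ α β, (K.faces α ∨ α = ∅) ∧ (L.faces β ∨ β = ∅) ∧
    σ = α.image Sum.inl ∪ β.image Sum.inr}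

/-- The disjoint union of two simplicial complexes. -/
def sDisjUnion {V W : Type*} [DecidableEq V] [DecidableEq W] (K : SComplex V) (L : SComplex W) :
    SComplex (V ⊕ W) :=
  ofGens ({σ | ∃ α, K.faces α ∧ σ = α.image Sum.inl} ∪
          {σ | ∃ β, L.faces β ∧ σ = β.image Sum.inr})

/-- The simplicial complex of a simple graph (vertices and edges). -/
def graphComplex {V : Type*} [DecidableEq V] (G : SimpleGraph V) : SComplex V :=
  ofGens ({σ | ∃ x, σ = {x}} ∪ {σ | ∃ x y, G.Adj x y ∧ σ = ({x, y} : Finset V)})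

/-- Attach a leaf (pendant edge) to `K` at the vertex `x`. -/
def attachLeaf {V : Type*} [DecidableEq V] (K : SComplex V) (x : V) : SComplex (V ⊕ Unit) :=
  ofGens ({σ | ∃ α, K.faces α ∧ σ = α.image Sum.inl} ∪
          {({Sum.inl x, Sum.inr ()} : Finset (V ⊕ Unit))})

/-- The cycle graph on `ZMod n`. -/
def cycleGraph (n : ℕ) : SimpleGraph (ZMod n) :=
  SimpleGraph.fromRel (fun i j => j = i + 1)

/-- Attach one new leaf to every vertex of a graph. -/
def addLeaves {V : Type*} [DecidableEq V] (G : SimpleGraph V) : SComplex (V ⊕ V) :=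
  ofGens ({σ | ∃ x y, G.Adj x y ∧ σ = ({Sum.inl x, Sum.inl y} : Finset (V ⊕ V))} ∪
          {σ | ∃ u, σ = ({Sum.inl u, Sum.inr u} : Finset (V ⊕ V))})

/-- The geometric realization of `K`, inside `V → ℝ`. -/
def realization {V : Type*} (K : SComplex V) : Set (V → ℝ) :=
  {f | ∃ σ, K.faces σ ∧ (∀ x, 0 ≤ f x) ∧ (∀ x, f x ≠ 0 → x ∈ σ) ∧ ∑ x ∈ σ, f x = 1}

/-- A Hasse-diagram edge of a poset: a covering pair. -/
structure HEdge (P : Type*) [PartialOrder P] where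
  lo : P
  hi : P
  cov : lo ⋖ hi

noncomputable instance {P : Type*} [PartialOrder P] : DecidableEq (HEdge P) :=
  Classical.decEq _

def HEdge.Compat {P : Type*} [PartialOrder P] (p q : HEdge P) : Prop :=
  p.lo ≠ q.lo ∧ p.lo ≠ q.hi ∧ p.hi ≠ q.lo ∧ p.hi ≠ q.hi

def HasPosetCycle {P : Type*} [PartialOrder P] (W : Set (HEdge P)) : Prop :=
  ∃ k : ℕ, 0 < k ∧ ∃ c : ZMod k → HEdge P, (∀ i, c i ∈ W) ∧
    ∀ i, (c (i + 1)).lo ⋖ (c i).hi ∧ (c (i + 1)).lo ≠ (c i).lo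

/-- The generalized Morse complex `f(P)` of a poset: simplices are acyclic
matchings of the Hasse diagram of `P`. -/
def genMorse (P : Type*) [PartialOrder P] : SComplex (HEdge P) where
  faces S := S.Nonempty ∧ (∀ p ∈ S, ∀ q ∈ S, p ≠ q → HEdge.Compat p q) ∧
    ¬ HasPosetCycle {p | p ∈ S}
  not_empty h := by simpa using h.1
  down_closed := by
    rintro σ τ ⟨-, hm, hc⟩ hsub hne
    refine ⟨hne, fun p hp q hq h => hm p (hsub hp) q (hsub hq) h, fun h => hc ?_⟩
    obtain ⟨k, hk, c, hc', hp⟩ := h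
    exact ⟨k, hk, c, fun i => hsub (hc' i), hp⟩

/-- The automorphism group of a simplicial complex, as a subgroup of `Perm V`. -/
def autGroup {V : Type*} [DecidableEq V] (K : SComplex V) : Subgroup (Equiv.Perm V) where
  carrier := {e | ∀ σ : Finset V, K.faces σ ↔ K.faces (σ.image e)}
  one_mem' := by intro σ; simp
  mul_mem' := by
    intro a b ha hb σ
    rw [hb σ, ha (σ.image b)]
    simp [Finset.image_image, Equiv.Perm.coe_mul]
  inv_mem' := by
    intro a ha σ
    have := ha (σ.image ⇑a⁻¹)
    simpa [Finset.image_image, Function.comp_def,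
      Finset.image_id'] using this.symm

/-- The full subcomplex of `K` on a set `S` of vertices. -/
def restrictTo {V : Type*} (K : SComplex V) (S : Set V) : Finset V → Prop :=
  fun σ => K.faces σ ∧ ∀ x ∈ σ, x ∈ S

/-- `S` spans a fully connected subcomplex: `K = (K∣S) * (K∣Sᶜ)`. -/
def FullyConnected {V : Type*} [DecidableEq V] (K : SComplex V) (S : Set V) : Prop :=
  ∀ σ : Finset V, K.faces σ ↔ (σ.Nonempty ∧ ∃ α β : Finset V,
    (restrictTo K S α ∨ α = ∅) ∧ ((K.faces β ∧ ∀ x ∈ β, x ∉ S) ∨ β = ∅) ∧ σ = α ∪ β)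

/-- The primitive pair `(x, xy)` on an edge `{x,y}`. -/
def edgePair {V : Type*} [DecidableEq V] (K : SComplex V) (x y : V) (hxy : x ≠ y)
    (h : K.faces {x, y}) : VPair K where
  lo := {x}
  hi := {x, y}
  lo_face := K.down_closed h (by simp) (Finset.singleton_nonempty x)
  hi_face := h
  lo_sub := by simp
  card_eq := by
    rw [Finset.card_singleton, Finset.card_insert_of_notMem (by simp [hxy]),
      Finset.card_singleton]


/-!
Every pair of the Morse complex of `addLeaves G` matches a vertex with an edge through it. The
vertex map `leafRetract`, which moves a pair `(inl j, e)` with `e` not the leaf edge at `j` to the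
pair `(inr j, leafEdge j)`, is contiguous to the identity: closed V-paths never use pairs on leaf
edges, so for a gradient vector field `S` the union of `S` and its image is again one. Hence the
realization deformation retracts onto the subcomplex spanned by the `2 |V|` pairs on leaf edges.
Two pairs on the same leaf edge never lie in a common face, and any choice of one pair per leaf
edge does, so this subcomplex is the boundary of the cross-polytope in `ℝ^V`, which radial
projection identifies with the unit sphere. This works for every finite graph `G`; the centipede
is the case of the path.
-/

open Sum

namespace VPair

variable {V : Type*} {K : SComplex V} {p q : VPair K}

theorem ext (hlo : p.lo = q.lo) (hhi : p.hi = q.hi) : p = q := by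
  cases p; cases q; cases hlo; cases hhi; rfl

theorem Compatible.symm (h : p.Compatible q) : q.Compatible p :=
  ⟨h.1.symm, h.2.2.1.symm, h.2.1.symm, h.2.2.2.symm⟩

theorem compatible_of_card_eq (hcard : p.lo.card = q.lo.card) (hlo : p.lo ≠ q.lo)
    (hhi : p.hi ≠ q.hi) : p.Compatible q :=
  ⟨hlo, fun h => by have := q.card_eq; rw [← h] at this; omega,
    fun h => by have := p.card_eq; rw [h] at this; omega, hhi⟩

end VPair

theorem HasClosedPath.mono {V : Type*} {K : SComplex V} {W W' : Set (VPair K)} (hW : W ⊆ W')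
    (h : HasClosedPath W) : HasClosedPath W' := by
  obtain ⟨k, hk, c, hc, hstep⟩ := h
  exact ⟨k, hk, c, fun i => hW (hc i), hstep⟩

noncomputable instance {V : Type*} [Fintype V] (K : SComplex V) : Fintype (VPair K) :=
  Fintype.ofInjective (fun p => (p.lo, p.hi))
    fun _ _ h => VPair.ext (congrArg Prod.fst h) (congrArg Prod.snd h)

section PushWeights

variable {α β : Type*} [Fintype α] [DecidableEq β]

/-- On barycentric weights, `pushWeights φ` is the affine extension of the vertex map `φ`. -/
noncomputable def pushWeights (φ : α → β) (f : α → ℝ) (b : β) : ℝ :=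
  ∑ a with φ a = b, f a

variable {φ : α → β} {f : α → ℝ}

theorem pushWeights_nonneg (hf : ∀ a, 0 ≤ f a) (b : β) : 0 ≤ pushWeights φ f b :=
  sum_nonneg fun a _ => hf a

theorem sum_pushWeights [Fintype β] : ∑ b, pushWeights φ f b = ∑ a, f a :=
  sum_fiberwise univ φ f

theorem exists_of_pushWeights_ne_zero {b : β} (h : pushWeights φ f b ≠ 0) :
    ∃ a, f a ≠ 0 ∧ φ a = b := by
  obtain ⟨a, ha, hfa⟩ := exists_ne_zero_of_sum_ne_zero h
  exact ⟨a, hfa, (mem_filter.mp ha).2⟩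

theorem pushWeights_apply_of_injective (hφ : Function.Injective φ) (a : α) :
    pushWeights φ f (φ a) = f a :=
  sum_eq_single a (fun _ ha' hne => absurd (hφ (mem_filter.mp ha').2) hne)
    fun ha => (ha (mem_filter.mpr ⟨mem_univ a, rfl⟩)).elim

theorem pushWeights_eq_zero_of_notMem_range {b : β} (hb : b ∉ Set.range φ) :
    pushWeights φ f b = 0 := by
  by_contra h
  obtain ⟨a, -, rfl⟩ := exists_of_pushWeights_ne_zero h
  exact hb ⟨a, rfl⟩

theorem pushWeights_comp_eq_self (hφ : Function.Injective φ) {g : β → ℝ}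
    (hg : ∀ b, g b ≠ 0 → b ∈ Set.range φ) : pushWeights φ (g ∘ φ) = g := by
  funext b
  by_cases hb : b ∈ Set.range φ
  · obtain ⟨a, rfl⟩ := hb
    exact pushWeights_apply_of_injective hφ a
  · rw [pushWeights_eq_zero_of_notMem_range hb]
    exact (not_not.mp (mt (hg b) hb)).symm

theorem continuous_pushWeights (φ : α → β) : Continuous (pushWeights φ) :=
  continuous_pi fun _ => continuous_finsetSum _ fun a _ => continuous_apply a

theorem pushWeights_eq_self [DecidableEq α] {ψ : α → α} (h : ∀ a, f a ≠ 0 → ψ a = a) :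
    pushWeights ψ f = f := by
  funext b
  refine sum_eq_single b (fun a ha hab => ?_) fun hb => ?_
  · by_contra hfa
    exact hab ((h a hfa).symm.trans (mem_filter.mp ha).2)
  · by_contra hfb
    exact hb (mem_filter.mpr ⟨mem_univ b, h b hfb⟩)

end PushWeights

section Realization

variable {α : Type*} [Fintype α] {K : SComplex α}

theorem mem_realization_iff {f : α → ℝ} :
    f ∈ realization K ↔
      (∀ x, 0 ≤ f x) ∧ ∑ x, f x = 1 ∧ ∃ σ, K.faces σ ∧ ∀ x, f x ≠ 0 → x ∈ σ := by
  have hsum : ∀ σ : Finset α, (∀ x, f x ≠ 0 → x ∈ σ) → ∑ x ∈ σ, f x = ∑ x, f x :=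
    fun σ hσ => sum_subset (subset_univ σ) fun x _ hx => not_not.mp (mt (hσ x) hx)
  constructor
  · rintro ⟨σ, hσ, h0, hsupp, h1⟩
    exact ⟨h0, hsum σ hsupp ▸ h1, σ, hσ, hsupp⟩
  · rintro ⟨h0, h1, σ, hσ, hsupp⟩
    exact ⟨σ, hσ, h0, hsupp, (hsum σ hsupp).trans h1⟩

variable [DecidableEq α] {φ : α → α}

def IsContiguousToId (K : SComplex α) (φ : α → α) : Prop :=
  ∀ σ, K.faces σ → K.faces (σ ∪ σ.image φ)

theorem IsContiguousToId.lineMap_mem (hφ : IsContiguousToId K φ) {f : α → ℝ}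
    (hf : f ∈ realization K) {t : ℝ} (ht : t ∈ Set.Icc (0 : ℝ) 1) :
    AffineMap.lineMap f (pushWeights φ f) t ∈ realization K := by
  obtain ⟨h0, h1, σ, hσ, hsupp⟩ := mem_realization_iff.mp hf
  have hpush0 := pushWeights_nonneg (φ := φ) h0
  rw [AffineMap.lineMap_apply_module]
  refine mem_realization_iff.mpr ⟨fun x => ?_, ?_, σ ∪ σ.image φ, hφ σ hσ, fun x hx => ?_⟩
  · simp only [Pi.add_apply, Pi.smul_apply, smul_eq_mul]
    exact add_nonneg (mul_nonneg (sub_nonneg.mpr ht.2) (h0 x)) (mul_nonneg ht.1 (hpush0 x))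
  · simp only [Pi.add_apply, Pi.smul_apply, smul_eq_mul, sum_add_distrib, ← mul_sum,
      sum_pushWeights, h1]
    ring
  · by_cases hfx : f x = 0
    · have : pushWeights φ f x ≠ 0 := fun h => hx (by simp [hfx, h])
      obtain ⟨a, ha, rfl⟩ := exists_of_pushWeights_ne_zero this
      exact mem_union_right _ (mem_image_of_mem φ (hsupp a ha))
    · exact mem_union_left _ (hsupp x hfx)

theorem IsContiguousToId.pushWeights_mem (hφ : IsContiguousToId K φ) {f : α → ℝ}
    (hf : f ∈ realization K) : pushWeights φ f ∈ realization K := by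
  simpa using hφ.lineMap_mem hf (t := 1) ⟨zero_le_one, le_rfl⟩

noncomputable def IsContiguousToId.realizationMap (hφ : IsContiguousToId K φ) :
    C(realization K, realization K) where
  toFun f := ⟨pushWeights φ f, hφ.pushWeights_mem f.2⟩
  continuous_toFun := ((continuous_pushWeights φ).comp continuous_subtype_val).subtype_mk _

noncomputable def IsContiguousToId.homotopy (hφ : IsContiguousToId K φ) :
    (ContinuousMap.id (realization K)).Homotopy hφ.realizationMap where
  toFun x := ⟨ContinuousMap.Homotopy.affine ⟨Subtype.val, continuous_subtype_val⟩
      ⟨_, (continuous_pushWeights φ).comp continuous_subtype_val⟩ x, hφ.lineMap_mem x.2.2 x.1.2⟩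
  continuous_toFun := (ContinuousMap.Homotopy.affine _ _).continuous.subtype_mk _
  map_zero_left _ := by ext1; simp
  map_one_left _ := by ext1; simp [IsContiguousToId.realizationMap]

end Realization

section AddLeaves

variable {V : Type*} [DecidableEq V] {G : SimpleGraph V}

def leafEdge (j : V) : Finset (V ⊕ V) := {inl j, inr j}

theorem mem_leafEdge {j : V} {x : V ⊕ V} : x ∈ leafEdge j ↔ x = inl j ∨ x = inr j := by
  simp [leafEdge]

theorem leafEdge_injective : Function.Injective (leafEdge (V := V)) := fun a b h => by
  simpa using mem_leafEdge.mp (h ▸ mem_leafEdge.mpr (Or.inl rfl) : inl a ∈ leafEdge b)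

theorem leafEdge_mem_faces (j : V) : (addLeaves G).faces (leafEdge j) :=
  ⟨⟨inl j, mem_leafEdge.mpr (Or.inl rfl)⟩, leafEdge j, Or.inr ⟨j, rfl⟩, subset_rfl⟩

theorem mem_leafEdge_elim (x : V ⊕ V) : x ∈ leafEdge (x.elim id id) := by
  cases x <;> simp [mem_leafEdge]

def leafPair (x : V ⊕ V) : VPair (addLeaves G) where
  lo := {x}
  hi := leafEdge (x.elim id id)
  lo_face := (addLeaves G).down_closed (leafEdge_mem_faces _)
    (singleton_subset_iff.mpr (mem_leafEdge_elim x)) (singleton_nonempty x)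
  hi_face := leafEdge_mem_faces _
  lo_sub := singleton_subset_iff.mpr (mem_leafEdge_elim x)
  card_eq := by cases x <;> simp [leafEdge]

theorem leafPair_injective : Function.Injective (leafPair (G := G)) :=
  fun _ _ h => singleton_injective (congrArg VPair.lo h)

theorem leafPair_compatible {x y : V ⊕ V} (h : x.elim id id ≠ y.elim id id) :
    (leafPair (G := G) x).Compatible (leafPair y) :=
  VPair.compatible_of_card_eq (by simp [leafPair]) (fun hxy => h (by
    rw [singleton_injective hxy])) (fun hxy => h (leafEdge_injective hxy))

namespace VPair

variable (p : VPair (addLeaves G))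

theorem lo_card_eq_one_and_hi_cases : p.lo.card = 1 ∧
    ((∃ x y, G.Adj x y ∧ p.hi = {inl x, inl y}) ∨ ∃ j, p.hi = leafEdge j) := by
  obtain ⟨-, τ, hτ, hsub⟩ := p.hi_face
  have hτ2 : τ.card ≤ 2 := by
    rcases hτ with ⟨x, y, -, rfl⟩ | ⟨j, rfl⟩ <;> exact card_le_two
  have hlo : 1 ≤ p.lo.card := card_pos.mpr p.lo_face.1
  have hhi : p.hi.card ≤ τ.card := card_le_card hsub
  have := p.card_eq
  obtain rfl : p.hi = τ := eq_of_subset_of_card_le hsub (by omega)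
  exact ⟨by omega, hτ⟩

theorem lo_card_eq_one : p.lo.card = 1 := p.lo_card_eq_one_and_hi_cases.1

theorem hi_eq_leafEdge_of_inr_mem {j : V} (h : inr j ∈ p.hi) : p.hi = leafEdge j := by
  rcases p.lo_card_eq_one_and_hi_cases.2 with ⟨x, y, -, hxy⟩ | ⟨i, hi⟩
  · simp [hxy] at h
  · rw [hi] at h ⊢
    obtain rfl : j = i := by simpa using mem_leafEdge.mp h
    rfl

theorem eq_leafPair_of_lo_eq_inr {j : V} (h : p.lo = {inr j}) : p = leafPair (inr j) :=
  VPair.ext h (p.hi_eq_leafEdge_of_inr_mem (p.lo_sub (h ▸ mem_singleton_self _)))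

theorem exists_eq_leafPair_of_hi_eq {j : V} (h : p.hi = leafEdge j) : ∃ x, p = leafPair x := by
  obtain ⟨x, hx⟩ := card_eq_one.mp p.lo_card_eq_one
  refine ⟨x, VPair.ext hx ?_⟩
  have hmem : x ∈ leafEdge j := h ▸ p.lo_sub (hx ▸ mem_singleton_self x)
  rcases mem_leafEdge.mp hmem with rfl | rfl <;> exact h

end VPair

/-- A leaf-edge pair on a closed path would be followed (if its vertex is `inl j`) or preceded
(if it is `inr j`) by a different pair on the same edge, which a discrete vector field forbids. -/
theorem IsDVF.hasClosedPath_avoiding_leafEdges {W : Set (VPair (addLeaves G))} (hW : IsDVF W)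
    (h : HasClosedPath W) : HasClosedPath {p ∈ W | ∀ j, p.hi ≠ leafEdge j} := by
  obtain ⟨k, hk, c, hcW, hstep⟩ := h
  have hne : ∀ i, (c (i + 1)).hi ≠ (c i).hi := fun i =>
    (hW _ (hcW _) _ (hcW i) fun h => (hstep i).2.1 (h ▸ rfl)).2.2.2
  refine ⟨k, hk, c, fun i => ⟨hcW i, fun j hj => ?_⟩, hstep⟩
  obtain ⟨x, hx⟩ := (c i).exists_eq_leafPair_of_hi_eq hj
  cases x with
  | inl m =>
    obtain ⟨z, hz⟩ := card_eq_one.mp (c (i + 1)).lo_card_eq_one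
    have hzi : z ∈ leafEdge m := by
      simpa [hx, leafPair] using (hstep i).1 (hz ▸ mem_singleton_self z)
    rcases mem_leafEdge.mp hzi with rfl | rfl
    · exact (hstep i).2.1 (by rw [hz, hx]; rfl)
    · refine hne i ?_
      rw [(c (i + 1)).hi_eq_leafEdge_of_inr_mem ((c (i + 1)).lo_sub (hz ▸ mem_singleton_self _)),
        hx]
      rfl
  | inr m =>
    have hmem : inr m ∈ (c (i - 1)).hi := by
      simpa [hx, leafPair] using (hstep (i - 1)).1
    refine hne (i - 1) ?_
    rw [sub_add_cancel, (c (i - 1)).hi_eq_leafEdge_of_inr_mem hmem, hx]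
    rfl

end AddLeaves

section LeafRetract

variable {V : Type*} [DecidableEq V] {G : SimpleGraph V}

open scoped Classical in
noncomputable def leafRetract (p : VPair (addLeaves G)) : VPair (addLeaves G) :=
  if h : ∃ j, p.lo = {inl j} ∧ p.hi ≠ leafEdge j then leafPair (inr h.choose) else p

theorem leafRetract_of_not {p : VPair (addLeaves G)}
    (h : ¬∃ j, p.lo = {inl j} ∧ p.hi ≠ leafEdge j) : leafRetract p = p := by
  classical exact dif_neg h

theorem leafRetract_of {p : VPair (addLeaves G)} {j : V} (hlo : p.lo = {inl j})
    (hhi : p.hi ≠ leafEdge j) : leafRetract p = leafPair (inr j) := by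
  have h : ∃ j, p.lo = {inl j} ∧ p.hi ≠ leafEdge j := ⟨j, hlo, hhi⟩
  classical
  rw [leafRetract, dif_pos h, inl_injective (singleton_injective (h.choose_spec.1.symm.trans hlo))]

theorem leafRetract_leafPair (x : V ⊕ V) : leafRetract (leafPair (G := G) x) = leafPair x := by
  refine leafRetract_of_not ?_
  rintro ⟨j, hlo, hhi⟩
  obtain rfl : x = inl j := singleton_injective hlo
  exact hhi rfl

theorem exists_leafRetract_eq_leafPair (p : VPair (addLeaves G)) :
    ∃ x, leafRetract p = leafPair x := by
  by_cases h : ∃ j, p.lo = {inl j} ∧ p.hi ≠ leafEdge j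
  · obtain ⟨j, hlo, hhi⟩ := h
    exact ⟨inr j, leafRetract_of hlo hhi⟩
  rw [leafRetract_of_not h]
  obtain ⟨z, hz⟩ := card_eq_one.mp p.lo_card_eq_one
  cases z with
  | inl j => exact p.exists_eq_leafPair_of_hi_eq (not_not.mp fun hhi => h ⟨j, hz, hhi⟩)
  | inr j => exact ⟨inr j, p.eq_leafPair_of_lo_eq_inr hz⟩

variable {S : Finset (VPair (addLeaves G))}

theorem compatible_leafRetract (hS : IsDVF {p | p ∈ S}) {p q : VPair (addLeaves G)} (hp : p ∈ S)
    (hq : q ∈ S) (hne : leafRetract p ≠ q) : (leafRetract p).Compatible q := by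
  by_cases h : ∃ j, p.lo = {inl j} ∧ p.hi ≠ leafEdge j
  swap
  · rw [leafRetract_of_not h] at hne ⊢
    exact hS p hp q hq hne
  obtain ⟨j, hlo, hhi⟩ := h
  rw [leafRetract_of hlo hhi] at hne ⊢
  refine VPair.compatible_of_card_eq (by simp [leafPair, q.lo_card_eq_one])
    (fun h => hne (q.eq_leafPair_of_lo_eq_inr h.symm).symm) fun h => ?_
  obtain ⟨x, rfl⟩ := q.exists_eq_leafPair_of_hi_eq h.symm
  obtain rfl : x.elim id id = j := leafEdge_injective h.symm
  cases x with
  | inl m =>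
    exact (hS p hp _ hq fun hpq => hhi (hpq ▸ rfl)).1 hlo
  | inr m => exact hne rfl

theorem compatible_leafRetract_leafRetract (hS : IsDVF {p | p ∈ S}) {p q : VPair (addLeaves G)}
    (hp : p ∈ S) (hq : q ∈ S) (hne : leafRetract p ≠ leafRetract q) :
    (leafRetract p).Compatible (leafRetract q) := by
  by_cases hq' : ∃ m, q.lo = {inl m} ∧ q.hi ≠ leafEdge m
  swap
  · rw [leafRetract_of_not hq'] at hne ⊢
    exact compatible_leafRetract hS hp hq hne
  by_cases hp' : ∃ j, p.lo = {inl j} ∧ p.hi ≠ leafEdge j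
  swap
  · rw [leafRetract_of_not hp'] at hne ⊢
    exact (compatible_leafRetract hS hq hp hne.symm).symm
  obtain ⟨j, hlo, hhi⟩ := hp'
  obtain ⟨m, hlo', hhi'⟩ := hq'
  rw [leafRetract_of hlo hhi, leafRetract_of hlo' hhi'] at hne ⊢
  exact leafPair_compatible fun h => hne (by simp_all)

theorem IsDVF.union_image_leafRetract (hS : IsDVF {p | p ∈ S}) :
    IsDVF {p | p ∈ S ∪ S.image leafRetract} := by
  rintro p hp q hq hne
  simp only [Set.mem_ofPred_eq, mem_union, mem_image] at hp hq
  rcases hp with hp | ⟨p, hp, rfl⟩ <;> rcases hq with hq | ⟨q, hq, rfl⟩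
  · exact hS p hp q hq hne
  · exact (compatible_leafRetract hS hq hp hne.symm).symm
  · exact compatible_leafRetract hS hp hq hne
  · exact compatible_leafRetract_leafRetract hS hp hq hne

/-- Since closed paths avoid leaf-edge pairs and `leafRetract` only creates such pairs,
a closed path in `S ∪ leafRetract '' S` already lies in `S`. -/
theorem isContiguousToId_leafRetract :
    IsContiguousToId (MorseComplex (addLeaves G)) leafRetract := by
  rintro S ⟨hne, hS, hacyc⟩
  have hdvf := IsDVF.union_image_leafRetract hS
  refine ⟨hne.mono subset_union_left, hdvf, fun h => hacyc ?_⟩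
  refine (hdvf.hasClosedPath_avoiding_leafEdges h).mono ?_
  rintro p ⟨hp, hleaf⟩
  rcases mem_union.mp hp with hp | hp
  · exact hp
  obtain ⟨q, hq, rfl⟩ := mem_image.mp hp
  by_cases h : ∃ j, q.lo = {inl j} ∧ q.hi ≠ leafEdge j
  · obtain ⟨j, hlo, hhi⟩ := h
    exact absurd (by rw [leafRetract_of hlo hhi]; rfl) (hleaf j)
  · rwa [leafRetract_of_not h]

end LeafRetract

section CrossPolytope

variable {V : Type*}

noncomputable def crossVector (w : V ⊕ V → ℝ) : EuclideanSpace ℝ V :=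
  WithLp.toLp 2 fun j => w (inl j) - w (inr j)

theorem continuous_crossVector : Continuous (crossVector (V := V)) :=
  (PiLp.continuous_toLp 2 _).comp
    (continuous_pi fun _ => (continuous_apply _).sub (continuous_apply _))

variable [Fintype V]

/-- Barycentric coordinates of a point on the boundary of the cross-polytope with vertices
`±eⱼ`: the weight of `inl j` is put on `eⱼ`, that of `inr j` on `-eⱼ`. -/
def IsCrossWeight (w : V ⊕ V → ℝ) : Prop :=
  (∀ x, 0 ≤ w x) ∧ ∑ x, w x = 1 ∧ ∀ j, w (inl j) = 0 ∨ w (inr j) = 0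

noncomputable def crossWeightOf (y : EuclideanSpace ℝ V) : V ⊕ V → ℝ :=
  Sum.elim (fun j => (y j)⁺ / ∑ i, |y i|) fun j => (y j)⁻ / ∑ i, |y i|

theorem sum_abs_pos {y : EuclideanSpace ℝ V} (hy : y ≠ 0) : 0 < ∑ i, |y i| := by
  obtain ⟨i, hi⟩ : ∃ i, y i ≠ 0 := by
    by_contra! h
    exact hy (PiLp.ext (by simpa using h))
  exact sum_pos' (fun i _ => abs_nonneg _) ⟨i, mem_univ i, abs_pos.mpr hi⟩

theorem continuousOn_crossWeightOf : ContinuousOn (crossWeightOf (V := V)) {y | y ≠ 0} := by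
  have hcoord (i : V) : Continuous fun y : EuclideanSpace ℝ V => y i :=
    PiLp.continuous_apply 2 (fun _ : V => ℝ) i
  have hsum : ContinuousOn (fun y : EuclideanSpace ℝ V => ∑ i, |y i|) {y | y ≠ 0} :=
    (continuous_finsetSum _ fun i _ => (hcoord i).abs).continuousOn
  have hne (y : EuclideanSpace ℝ V) (hy : y ∈ {y | y ≠ 0}) : ∑ i, |y i| ≠ 0 :=
    (sum_abs_pos hy).ne'
  refine continuousOn_pi.mpr fun x => ?_
  cases x with
  | inl j => exact (continuous_posPart.comp (hcoord j)).continuousOn.div hsum hne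
  | inr j => exact (continuous_negPart.comp (hcoord j)).continuousOn.div hsum hne

theorem isCrossWeight_crossWeightOf {y : EuclideanSpace ℝ V} (hy : y ≠ 0) :
    IsCrossWeight (crossWeightOf y) := by
  have hpos := sum_abs_pos hy
  refine ⟨fun x => ?_, ?_, fun j => ?_⟩
  · cases x <;> exact div_nonneg (by simp) hpos.le
  · rw [Fintype.sum_sum_type]
    simp only [crossWeightOf, Sum.elim_inl, Sum.elim_inr, ← sum_div, ← add_div, ← sum_add_distrib,
      posPart_add_negPart]
    exact div_self hpos.ne'
  · rcases le_total 0 (y j) with h | h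
    · exact Or.inr (by simp [crossWeightOf, negPart_eq_zero.mpr h])
    · exact Or.inl (by simp [crossWeightOf, posPart_eq_zero.mpr h])

theorem crossWeightOf_smul {c : ℝ} (hc : 0 < c) (y : EuclideanSpace ℝ V) :
    crossWeightOf (c • y) = crossWeightOf y := by
  have hpos (a : ℝ) : (c * a)⁺ = c * a⁺ := by
    simp only [posPart_def, mul_max_of_nonneg _ _ hc.le, mul_zero]
  have hneg (a : ℝ) : (c * a)⁻ = c * a⁻ := by
    simp only [negPart_def, ← mul_neg, mul_max_of_nonneg _ _ hc.le, mul_zero]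
  have hsum : ∑ i, |c * y i| = c * ∑ i, |y i| := by
    simp [abs_mul, abs_of_pos hc, mul_sum]
  funext x
  cases x <;>
    simp only [crossWeightOf, Sum.elim_inl, Sum.elim_inr, PiLp.smul_apply, smul_eq_mul, hsum, hpos,
      hneg, mul_div_mul_left _ _ hc.ne']

theorem crossVector_crossWeightOf (y : EuclideanSpace ℝ V) :
    crossVector (crossWeightOf y) = (∑ i, |y i|)⁻¹ • y := by
  ext j
  simp [crossVector, crossWeightOf, div_eq_inv_mul, ← mul_sub]

namespace IsCrossWeight

variable {w : V ⊕ V → ℝ}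

theorem posPart_negPart (hw : IsCrossWeight w) (j : V) :
    (w (inl j) - w (inr j))⁺ = w (inl j) ∧ (w (inl j) - w (inr j))⁻ = w (inr j) := by
  have h0 := hw.1 (inl j)
  have h1 := hw.1 (inr j)
  rcases hw.2.2 j with h | h <;> rw [h] <;> simp [h0, h1]

theorem sum_abs_crossVector (hw : IsCrossWeight w) : ∑ j, |crossVector w j| = 1 := by
  simp only [crossVector, PiLp.toLp_apply, ← posPart_add_negPart, hw.posPart_negPart]
  rw [sum_add_distrib, ← Fintype.sum_sum_type, hw.2.1]

theorem crossVector_ne_zero (hw : IsCrossWeight w) : crossVector w ≠ 0 := fun h => by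
  simpa [h] using hw.sum_abs_crossVector

theorem crossWeightOf_crossVector (hw : IsCrossWeight w) : crossWeightOf (crossVector w) = w := by
  have h := hw.sum_abs_crossVector
  simp only [crossVector, PiLp.toLp_apply] at h
  funext x
  cases x <;> simp [crossWeightOf, crossVector, h, hw.posPart_negPart]

end IsCrossWeight

end CrossPolytope

theorem inv_norm_smul_smul_of_norm_eq_one {E : Type*} [NormedAddCommGroup E] [NormedSpace ℝ E]
    {y : E} (hy : ‖y‖ = 1) {c : ℝ} (hc : 0 < c) : ‖c • y‖⁻¹ • c • y = y := by
  rw [norm_smul, hy, mul_one, Real.norm_of_nonneg hc.le, smul_smul, inv_mul_cancel₀ hc.ne',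
    one_smul]

section MorseSphere

variable {V : Type*} [DecidableEq V] {G : SimpleGraph V}

theorem faces_image_leafPair {T : Finset (V ⊕ V)} (hT : T.Nonempty)
    (hinj : Set.InjOn (Sum.elim id id) (T : Set (V ⊕ V))) :
    (MorseComplex (addLeaves G)).faces (T.image leafPair) := by
  have hdvf : IsDVF {p | p ∈ T.image (leafPair (G := G))} := by
    rintro _ hp _ hq hne
    obtain ⟨x, hx, rfl⟩ := mem_image.mp hp
    obtain ⟨y, hy, rfl⟩ := mem_image.mp hq
    exact leafPair_compatible fun h => hne (congrArg leafPair (hinj hx hy h))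
  refine ⟨hT.image _, hdvf, fun h => ?_⟩
  obtain ⟨k, -, c, hc, -⟩ := hdvf.hasClosedPath_avoiding_leafEdges h
  obtain ⟨x, -, hx⟩ := mem_image.mp (hc 0).1
  exact (hc 0).2 (x.elim id id) (by rw [← hx]; rfl)

theorem pushWeights_leafRetract_pushWeights_leafPair [Fintype V] (w : V ⊕ V → ℝ) :
    pushWeights leafRetract (pushWeights (leafPair (G := G)) w) = pushWeights leafPair w :=
  pushWeights_eq_self fun _ hp => by
    obtain ⟨x, -, rfl⟩ := exists_of_pushWeights_ne_zero hp
    exact leafRetract_leafPair x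

variable [Fintype V]

theorem apply_leafPair_inl_eq_zero_or {f : VPair (addLeaves G) → ℝ}
    (hf : f ∈ realization (MorseComplex (addLeaves G))) (j : V) :
    f (leafPair (inl j)) = 0 ∨ f (leafPair (inr j)) = 0 := by
  obtain ⟨-, -, σ, ⟨-, hσ, -⟩, hsupp⟩ := mem_realization_iff.mp hf
  by_contra! h
  exact (hσ _ (hsupp _ h.1) _ (hsupp _ h.2) (leafPair_injective.ne inl_ne_inr)).2.2.2 rfl

theorem IsCrossWeight.pushWeights_leafPair_mem {w : V ⊕ V → ℝ} (hw : IsCrossWeight w) :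
    pushWeights leafPair w ∈ realization (MorseComplex (addLeaves G)) := by
  refine mem_realization_iff.mpr ⟨pushWeights_nonneg hw.1, sum_pushWeights.trans hw.2.1,
    ({x | w x ≠ 0} : Finset (V ⊕ V)).image leafPair, faces_image_leafPair ?_ ?_, fun p hp => ?_⟩
  · obtain ⟨x, -, hx⟩ := exists_ne_zero_of_sum_ne_zero (hw.2.1 ▸ one_ne_zero)
    exact ⟨x, mem_filter.mpr ⟨mem_univ x, hx⟩⟩
  · intro x hx y hy hxy
    simp only [coe_filter, mem_univ, true_and, Set.mem_ofPred_eq] at hx hy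
    cases x <;> cases y <;> simp only [Sum.elim_inl, Sum.elim_inr, id] at hxy <;> subst hxy
    · rfl
    · exact (hw.2.2 _).elim hx hy |>.elim
    · exact (hw.2.2 _).elim hy hx |>.elim
    · rfl
  · obtain ⟨x, hx, rfl⟩ := exists_of_pushWeights_ne_zero hp
    exact mem_image_of_mem _ (mem_filter.mpr ⟨mem_univ x, hx⟩)

theorem pushWeights_leafPair_comp_leafRetract (f : VPair (addLeaves G) → ℝ) :
    pushWeights leafPair (pushWeights leafRetract f ∘ leafPair) = pushWeights leafRetract f :=
  pushWeights_comp_eq_self leafPair_injective fun _ hp => by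
    obtain ⟨q, -, rfl⟩ := exists_of_pushWeights_ne_zero hp
    exact exists_leafRetract_eq_leafPair q |>.imp fun _ h => h.symm

theorem isCrossWeight_leafRetract {f : VPair (addLeaves G) → ℝ}
    (hf : f ∈ realization (MorseComplex (addLeaves G))) :
    IsCrossWeight (pushWeights leafRetract f ∘ leafPair) := by
  have hg := isContiguousToId_leafRetract.pushWeights_mem hf
  obtain ⟨h0, h1, -⟩ := mem_realization_iff.mp hg
  refine ⟨fun x => h0 _, ?_, apply_leafPair_inl_eq_zero_or hg⟩
  rw [← sum_pushWeights (φ := leafPair), pushWeights_leafPair_comp_leafRetract, h1]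

noncomputable def retractVector (f : VPair (addLeaves G) → ℝ) : EuclideanSpace ℝ V :=
  crossVector (pushWeights leafRetract f ∘ leafPair)

theorem continuous_retractVector : Continuous (retractVector (G := G)) :=
  continuous_crossVector.comp
    (continuous_pi fun x => (continuous_apply (leafPair x)).comp (continuous_pushWeights _))

variable (G)

noncomputable def morseToSphere :
    C(realization (MorseComplex (addLeaves G)), Metric.sphere (0 : EuclideanSpace ℝ V) 1) where
  toFun f := ⟨‖retractVector f.1‖⁻¹ • retractVector f.1, by
    simpa using norm_smul_inv_norm (𝕜 := ℝ) (x := retractVector (G := G) f.1)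
      (isCrossWeight_leafRetract f.2).crossVector_ne_zero⟩
  continuous_toFun := by
    have hc : Continuous fun f : realization (MorseComplex (addLeaves G)) => retractVector f.1 :=
      continuous_retractVector.comp continuous_subtype_val
    exact ((hc.norm.inv₀ fun f => norm_ne_zero_iff.mpr
      (isCrossWeight_leafRetract f.2).crossVector_ne_zero).smul hc).subtype_mk _

noncomputable def sphereToMorse :
    C(Metric.sphere (0 : EuclideanSpace ℝ V) 1, realization (MorseComplex (addLeaves G))) where
  toFun y := ⟨pushWeights leafPair (crossWeightOf y.1),
    (isCrossWeight_crossWeightOf (ne_zero_of_mem_unit_sphere y)).pushWeights_leafPair_mem⟩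
  continuous_toFun := Continuous.subtype_mk (((continuous_pushWeights leafPair).comp_continuousOn
    continuousOn_crossWeightOf).comp_continuous continuous_subtype_val
      fun y => by exact ne_zero_of_mem_unit_sphere y) _

theorem sphereToMorse_comp_morseToSphere :
    (sphereToMorse G).comp (morseToSphere G) = isContiguousToId_leafRetract.realizationMap := by
  ext1 f
  refine Subtype.ext ?_
  have hw := isCrossWeight_leafRetract f.2
  change pushWeights leafPair (crossWeightOf (‖retractVector f.1‖⁻¹ • retractVector f.1)) = _
  rw [retractVector, crossWeightOf_smul (inv_pos.mpr (norm_pos_iff.mpr hw.crossVector_ne_zero)),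
    hw.crossWeightOf_crossVector, pushWeights_leafPair_comp_leafRetract]
  rfl

theorem morseToSphere_comp_sphereToMorse :
    (morseToSphere G).comp (sphereToMorse G) = ContinuousMap.id _ := by
  ext1 y
  refine Subtype.ext ?_
  have hcoord : retractVector (pushWeights (leafPair (G := G)) (crossWeightOf y.1)) =
      (∑ i, |y.1 i|)⁻¹ • y.1 := by
    rw [retractVector, pushWeights_leafRetract_pushWeights_leafPair,
      show pushWeights leafPair (crossWeightOf y.1) ∘ leafPair = crossWeightOf y.1 from
        funext (pushWeights_apply_of_injective leafPair_injective), crossVector_crossWeightOf]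
  change ‖retractVector (pushWeights leafPair (crossWeightOf y.1))‖⁻¹ •
    retractVector (pushWeights leafPair (crossWeightOf y.1)) = y.1
  rw [hcoord]
  exact inv_norm_smul_smul_of_norm_eq_one (mem_sphere_zero_iff_norm.mp y.2)
    (inv_pos.mpr (sum_abs_pos (ne_zero_of_mem_unit_sphere y)))

open ContinuousMap in
noncomputable def morseAddLeavesHomotopyEquivSphere :
    realization (MorseComplex (addLeaves G)) ≃ₕ Metric.sphere (0 : EuclideanSpace ℝ V) 1 where
  toFun := morseToSphere G
  invFun := sphereToMorse G
  left_inv := sphereToMorse_comp_morseToSphere G ▸ ⟨isContiguousToId_leafRetract.homotopy.symm⟩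
  right_inv := morseToSphere_comp_sphereToMorse G ▸ Homotopic.refl _

end MorseSphere

theorem stmt_14_general (v : ℕ) :
    Nonempty (ContinuousMap.HomotopyEquiv
      (realization (MorseComplex (addLeaves (SimpleGraph.pathGraph v))))
      (Metric.sphere (0 : EuclideanSpace ℝ (Fin v)) 1)) :=
  ⟨morseAddLeavesHomotopyEquivSphere _⟩

/-- the Morse complex of the centipede graph `𝒞_v` is homotopy
equivalent to `S^{v-1}`. -/
theorem stmt_14 (v : ℕ) (hv : 1 ≤ v) :
    Nonempty (ContinuousMap.HomotopyEquiv
      (realization (MorseComplex (addLeaves (SimpleGraph.pathGraph v))))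
      (Metric.sphere (0 : EuclideanSpace ℝ (Fin v)) 1)) :=
  stmt_14_general v
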